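/- arXiv:2309.09239 — 2 statements merged into one kernel-verified Lean document; each statement's English description precedes it below -/
import Mathlib

section
/- Let H : ℝⁿ → ℝ be differentiable with L-Lipschitz gradient, F proper lower semicontinuous, τ > 0, and suppose x⁺ minimizes w ↦ F(w) + ⟨∇H(y), w - y⟩ + (τ/2)‖w - y‖². Then the vector g = ∇H(x⁺) - ∇H(y) + τ(y - x⁺) belongs to the Fréchet subdifferential of H + F at x⁺, and ‖g‖ ≤ (L + τ)‖x⁺ - y‖. -/
open Filter Topology RealInnerProductSpace

/-- `u` is a Fréchet subgradient of `f` at `x`. -/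
def HasFrechetSubgradAt {n : ℕ} (f : EuclideanSpace ℝ (Fin n) → EReal)
    (x u : EuclideanSpace ℝ (Fin n)) : Prop :=
  ∀ ε : ℝ, 0 < ε → ∀ᶠ y in 𝓝[≠] x,
    f x + ((⟪u, y - x⟫ - ε * ‖y - x‖ : ℝ) : EReal) ≤ f y

/-!
Write `φ w = ⟪∇H y, w - y⟫ + (τ/2)‖w - y‖²`. Since `x⁺` minimizes `F + φ`, the zero vector is a
Fréchet subgradient of `F + φ` at `x⁺`. The Fréchet sum rule with a differentiable summand, applied
once to remove `φ` and once to add `H`, shows that `∇H(x⁺) - ∇φ(x⁺) = g` is a Fréchet subgradient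
of `H + F` at `x⁺`. The bound on `‖g‖` is the triangle inequality with the Lipschitz gradient.
-/

section Gradient

variable {E : Type*} [NormedAddCommGroup E] [InnerProductSpace ℝ E] [CompleteSpace E]
  {h : E → ℝ} {v x : E}

theorem HasGradientAt.neg (hh : HasGradientAt h v x) : HasGradientAt (fun y => -h y) (-v) x := by
  rw [hasGradientAt_iff_hasFDerivAt, map_neg]
  exact hh.hasFDerivAt.neg

theorem HasGradientAt.eventually_add_inner_sub_le (hh : HasGradientAt h v x) {ε : ℝ} (hε : 0 < ε) :
    ∀ᶠ y in 𝓝 x, h x + ⟪v, y - x⟫ - ε * ‖y - x‖ ≤ h y := by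
  filter_upwards [(hasGradientAt_iff_isLittleO.1 hh).def hε] with y hy
  rw [Real.norm_eq_abs] at hy
  linarith [(abs_le.1 hy).1]

theorem hasGradientAt_inner_sub_add_norm_sub_sq (v y x : E) (τ : ℝ) :
    HasGradientAt (fun w => ⟪v, w - y⟫ + τ / 2 * ‖w - y‖ ^ 2) (v + τ • (x - y)) x := by
  rw [hasGradientAt_iff_hasFDerivAt]
  have hsub : HasFDerivAt (fun w : E => w - y) (ContinuousLinearMap.id ℝ E) x :=
    (hasFDerivAt_id x).sub_const y
  refine (((innerSL ℝ v).hasFDerivAt.comp x hsub).add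
    (hsub.norm_sq.const_mul (τ / 2))).congr_fderiv ?_
  ext w
  simp only [ContinuousLinearMap.comp_id, map_add, map_smul, map_sub, add_apply, smul_apply,
    sub_apply, coe_innerSL_apply, InnerProductSpace.toDual_apply_apply, nsmul_eq_mul,
    Nat.cast_ofNat, smul_eq_mul, add_right_inj]
  ring

end Gradient

section FrechetSubgradient

variable {n : ℕ} {f : EuclideanSpace ℝ (Fin n) → EReal} {h : EuclideanSpace ℝ (Fin n) → ℝ}
  {x u v : EuclideanSpace ℝ (Fin n)}

theorem IsLocalMin.hasFrechetSubgradAt_zero (hmin : IsLocalMin f x) :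
    HasFrechetSubgradAt f x 0 := fun ε hε => by
  filter_upwards [nhdsWithin_le_nhds hmin] with y hy
  refine le_trans (add_le_of_nonpos_right ?_) hy
  rw [inner_zero_left, zero_sub, EReal.coe_nonpos]
  exact neg_nonpos.2 (by positivity)

theorem HasFrechetSubgradAt.add_hasGradientAt (hf : HasFrechetSubgradAt f x u)
    (hh : HasGradientAt h v x) :
    HasFrechetSubgradAt (fun y => (h y : EReal) + f y) x (v + u) := fun ε hε => by
  filter_upwards [hf (ε / 2) (half_pos hε),
    nhdsWithin_le_nhds (hh.eventually_add_inner_sub_le (half_pos hε))] with y hf_le hh_le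
  have hsplit : ⟪v + u, y - x⟫ - ε * ‖y - x‖
      = (⟪v, y - x⟫ - ε / 2 * ‖y - x‖) + (⟪u, y - x⟫ - ε / 2 * ‖y - x‖) := by
    rw [inner_add_left]; ring
  calc (h x : EReal) + f x + ((⟪v + u, y - x⟫ - ε * ‖y - x‖ : ℝ) : EReal)
      = ((h x + ⟪v, y - x⟫ - ε / 2 * ‖y - x‖ : ℝ) : EReal)
          + (f x + ((⟪u, y - x⟫ - ε / 2 * ‖y - x‖ : ℝ) : EReal)) := by
        rw [hsplit, EReal.coe_add, add_sub_assoc, EReal.coe_add (h x)]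
        abel
    _ ≤ h y + f y := add_le_add (EReal.coe_le_coe_iff.2 hh_le) hf_le

theorem HasFrechetSubgradAt.sub_hasGradientAt
    (hf : HasFrechetSubgradAt (fun y => f y + (h y : EReal)) x u) (hh : HasGradientAt h v x) :
    HasFrechetSubgradAt f x (u - v) := by
  have hcancel : (fun y => ((-h y : ℝ) : EReal) + (f y + (h y : EReal))) = f := by
    funext y
    rw [add_left_comm, ← EReal.coe_add, neg_add_cancel, EReal.coe_zero, add_zero]
  simpa only [hcancel, neg_add_eq_sub] using hf.add_hasGradientAt hh.neg

end FrechetSubgradient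

theorem prox_step_subgradient_bound_general {n : ℕ}
    (H : EuclideanSpace ℝ (Fin n) → ℝ)
    (H' : EuclideanSpace ℝ (Fin n) → EuclideanSpace ℝ (Fin n))
    (L τ : ℝ) (hτ : 0 < τ)
    (hgrad : ∀ x, HasGradientAt H (H' x) x)
    (hlip : ∀ x y, ‖H' x - H' y‖ ≤ L * ‖x - y‖)
    (F : EuclideanSpace ℝ (Fin n) → EReal)
    (y xplus : EuclideanSpace ℝ (Fin n))
    (hmin : ∀ w, F xplus + ((⟪H' y, xplus - y⟫ + τ / 2 * ‖xplus - y‖ ^ 2 : ℝ) : EReal)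
      ≤ F w + ((⟪H' y, w - y⟫ + τ / 2 * ‖w - y‖ ^ 2 : ℝ) : EReal)) :
    HasFrechetSubgradAt (fun x => ((H x : ℝ) : EReal) + F x) xplus
      (H' xplus - H' y + τ • (y - xplus)) ∧
    ‖H' xplus - H' y + τ • (y - xplus)‖ ≤ (L + τ) * ‖xplus - y‖ := by
  have hF : HasFrechetSubgradAt F xplus (0 - (H' y + τ • (xplus - y))) :=
    IsLocalMin.hasFrechetSubgradAt_zero (Eventually.of_forall hmin)
      |>.sub_hasGradientAt (hasGradientAt_inner_sub_add_norm_sub_sq _ _ _ _)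
  refine ⟨?_, ?_⟩
  · convert hF.add_hasGradientAt (hgrad xplus) using 1
    module
  · calc ‖H' xplus - H' y + τ • (y - xplus)‖
        ≤ ‖H' xplus - H' y‖ + τ * ‖xplus - y‖ := by
          grw [norm_add_le, norm_smul, Real.norm_of_nonneg hτ.le, norm_sub_rev y xplus]
      _ ≤ (L + τ) * ‖xplus - y‖ := by linarith [hlip xplus y]

/-- Subgradient lower bound for one proximal-linearized step: if `x⁺` minimizes
`w ↦ F w + ⟪∇H y, w - y⟫ + (τ/2)‖w - y‖²`, then
`g = ∇H(x⁺) - ∇H(y) + τ(y - x⁺)` is a Fréchet subgradient of `H + F` at `x⁺`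
with `‖g‖ ≤ (L + τ)‖x⁺ - y‖`. -/
theorem prox_step_subgradient_bound {n : ℕ}
    (H : EuclideanSpace ℝ (Fin n) → ℝ)
    (H' : EuclideanSpace ℝ (Fin n) → EuclideanSpace ℝ (Fin n))
    (L τ : ℝ) (hτ : 0 < τ)
    (hgrad : ∀ x, HasGradientAt H (H' x) x)
    (hlip : ∀ x y, ‖H' x - H' y‖ ≤ L * ‖x - y‖)
    (F : EuclideanSpace ℝ (Fin n) → EReal)
    (hproper : ∃ x, F x ≠ ⊤) (hnobot : ∀ x, F x ≠ ⊥)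
    (hlsc : LowerSemicontinuous F)
    (y xplus : EuclideanSpace ℝ (Fin n))
    (hmin : ∀ w, F xplus + ((⟪H' y, xplus - y⟫ + τ / 2 * ‖xplus - y‖ ^ 2 : ℝ) : EReal)
      ≤ F w + ((⟪H' y, w - y⟫ + τ / 2 * ‖w - y‖ ^ 2 : ℝ) : EReal)) :
    HasFrechetSubgradAt (fun x => ((H x : ℝ) : EReal) + F x) xplus
      (H' xplus - H' y + τ • (y - xplus)) ∧
    ‖H' xplus - H' y + τ • (y - xplus)‖ ≤ (L + τ) * ‖xplus - y‖ :=
  prox_step_subgradient_bound_general H H' L τ hτ hgrad hlip F y xplus hmin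
end

section
/- Let (rₖ) be a nonincreasing sequence of positive reals satisfying r_{k}^{2θ - 1} ≤ d·(r_{k-1} - r_k) for some constant d > 0 and θ ∈ [1/2, 1). Then there exists q ∈ (0,1) (specifically q = d/(1+d) when θ = 1/2) such that rₖ ≤ q r_{k-1} for all sufficiently large k, hence (rₖ) converges to 0 at a linear rate. -/
/-!
A positive nonincreasing sequence converges to some `L ≥ 0` and its increments tend to `0`, so
the recursion forces `L ^ (2θ - 1) = 0`; when `θ = 1/2` this reads `1 = 0`, so that case is
vacuous, and otherwise `L = 0`. Once `rₖ ≤ 1`, the exponent `2θ - 1 ≤ 1` gives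
`rₖ ≤ rₖ ^ (2θ - 1) ≤ d (r_{k-1} - rₖ)`, which rearranges to `rₖ ≤ d / (1 + d) · r_{k-1}`.
-/

open Filter Topology

theorem tendsto_zero_of_rpow_le_mul_sub {r : ℕ → ℝ} {α d : ℝ} (hanti : Antitone r)
    (hnonneg : ∀ k, 0 ≤ r k) (hα : 0 ≤ α)
    (hrec : ∀ k, r (k + 1) ^ α ≤ d * (r k - r (k + 1))) :
    Tendsto r atTop (𝓝 0) := by
  set L := ⨅ k, r k
  have hL : Tendsto r atTop (𝓝 L) :=
    tendsto_atTop_ciInf hanti ⟨0, by rintro _ ⟨k, rfl⟩; exact hnonneg k⟩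
  have hL0 : 0 ≤ L := le_ciInf hnonneg
  have hshift : Tendsto (fun k ↦ r (k + 1)) atTop (𝓝 L) := hL.comp (tendsto_add_atTop_nat 1)
  have hincr : Tendsto (fun k ↦ d * (r k - r (k + 1))) atTop (𝓝 0) := by
    simpa using (hL.sub hshift).const_mul d
  have hLα : L ^ α ≤ 0 :=
    le_of_tendsto_of_tendsto' (hshift.rpow_const (Or.inr hα)) hincr hrec
  have hLz : L = 0 :=
    ((Real.rpow_eq_zero_iff_of_nonneg hL0).1 (hLα.antisymm (Real.rpow_nonneg hL0 α))).1
  rwa [hLz] at hL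

theorem le_div_one_add_mul_of_le_mul_sub {x y d : ℝ} (hd : 0 ≤ d) (h : x ≤ d * (y - x)) :
    x ≤ d / (1 + d) * y := by
  rw [div_mul_eq_mul_div, le_div_iff₀ (by linarith)]
  linarith

/-- KŁ linear rate: if `(rₖ)` is positive, nonincreasing, and satisfies
`rₖ^(2θ-1) ≤ d (r_{k-1} - rₖ)` with `θ ∈ [1/2, 1)` and `d > 0`, then `(rₖ)`
eventually contracts by a factor `q ∈ (0,1)` and converges to `0`. -/
theorem kl_linear_rate
    (r : ℕ → ℝ) (θ d : ℝ) (hθ1 : 1 / 2 ≤ θ) (hθ2 : θ < 1) (hd : 0 < d)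
    (hpos : ∀ k, 0 < r k) (hmono : ∀ k, r (k + 1) ≤ r k)
    (hrec : ∀ k : ℕ, 1 ≤ k → r k ^ (2 * θ - 1) ≤ d * (r (k - 1) - r k)) :
    (∃ q : ℝ, q ∈ Set.Ioo (0 : ℝ) 1 ∧ ∃ N : ℕ, ∀ k ≥ N, 1 ≤ k →
      r k ≤ q * r (k - 1)) ∧
    Tendsto r atTop (𝓝 0) := by
  have hnonneg k : 0 ≤ r k := (hpos k).le
  have htend : Tendsto r atTop (𝓝 0) :=
    tendsto_zero_of_rpow_le_mul_sub (antitone_nat_of_succ_le hmono) hnonneg (by linarith)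
      fun k ↦ hrec (k + 1) k.succ_pos
  have hq : d / (1 + d) ∈ Set.Ioo (0 : ℝ) 1 :=
    ⟨by positivity, (div_lt_one (by linarith)).2 (by linarith)⟩
  obtain ⟨N, hN⟩ := eventually_atTop.1 (htend.eventually_le_const one_pos)
  refine ⟨⟨d / (1 + d), hq, N, fun k hk hk1 ↦ le_div_one_add_mul_of_le_mul_sub hd.le ?_⟩, htend⟩
  calc r k ≤ r k ^ (2 * θ - 1) := Real.self_le_rpow_of_le_one (hnonneg k) (hN k hk) (by linarith)
    _ ≤ d * (r (k - 1) - r k) := hrec k hk1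
end
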